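/- Let k ≥ 2 and m = k^n − 1 with n ≥ 1. For i < k^n with i ≢ 0 handled naturally, the identity rev_n(rev_{n-1}(i)) ≡ k·i (mod m) implies that iterating the two-phase digit-reversal shuffle n times returns every element to its original position. -/

import Mathlib

/-- `revP k p i` reverses the `p` least significant base-`k` digits of `i`. -/
def revP (k p i : ℕ) : ℕ :=
  (i / k ^ p) * k ^ p + ∑ j ∈ Finset.range p, (i / k ^ j % k) * k ^ (p - 1 - j)

/-!
Write a `(p+1)`-digit number as `d * k^p + w` with top digit `d`. Reversing the low `p` digits
and then all `p+1` digits gives `w * k + d`, since the inner reversal of `w` is undone by the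
outer one: the shuffle rotates the digits cyclically by one place, so `p+1` rotations restore
every number.
-/

theorem mul_pow_add_lt_pow_add {k m n a b : ℕ} (ha : a < k ^ m) (hb : b < k ^ n) :
    a * k ^ n + b < k ^ (m + n) :=
  calc a * k ^ n + b < (a + 1) * k ^ n := by linarith
    _ ≤ k ^ m * k ^ n := Nat.mul_le_mul_right _ ha
    _ = k ^ (m + n) := (pow_add k m n).symm

theorem mul_add_div_of_lt {a b c : ℕ} (hc : c < b) : (a * b + c) / b = a := by
  rw [Nat.add_comm, Nat.add_mul_div_right _ _ (by omega), Nat.div_eq_of_lt hc, zero_add]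

def digitRev (k p i : ℕ) : ℕ :=
  ∑ j ∈ Finset.range p, (i / k ^ j % k) * k ^ (p - 1 - j)

theorem revP_eq (k p i : ℕ) : revP k p i = i / k ^ p * k ^ p + digitRev k p i := rfl

theorem digitRev_mod_pow (k p i : ℕ) : digitRev k p (i % k ^ p) = digitRev k p i := by
  refine Finset.sum_congr rfl fun j hj => ?_
  have hdigit (a : ℕ) : a / k ^ j % k = a % k ^ (j + 1) / k ^ j := by
    rw [pow_succ, Nat.mod_mul_right_div_self]
  rw [hdigit, hdigit, Nat.mod_mod_of_dvd _ (pow_dvd_pow k (Finset.mem_range.mp hj))]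

theorem digitRev_mul_pow_add (k p a b : ℕ) : digitRev k p (a * k ^ p + b) = digitRev k p b := by
  rw [← digitRev_mod_pow, mul_comm, Nat.mul_add_mod, digitRev_mod_pow]

theorem digitRev_succ (k p i : ℕ) :
    digitRev k (p + 1) i = i % k * k ^ p + digitRev k p (i / k) := by
  rw [digitRev, Finset.sum_range_succ', add_comm]
  congr 1
  · simp
  · refine Finset.sum_congr rfl fun j _ => ?_
    rw [show p + 1 - 1 - (j + 1) = p - 1 - j by omega, pow_succ', ← Nat.div_div_eq_div_mul]

theorem digitRev_succ' (k p i : ℕ) :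
    digitRev k (p + 1) i = k * digitRev k p i + i / k ^ p % k := by
  rw [digitRev, Finset.sum_range_succ, digitRev, Finset.mul_sum]
  congr 1
  · refine Finset.sum_congr rfl fun j hj => ?_
    rw [show p + 1 - 1 - j = p - 1 - j + 1 by have := Finset.mem_range.mp hj; omega, pow_succ]
    ring
  · simp

theorem digitRev_lt {k : ℕ} (hk : 0 < k) (p i : ℕ) : digitRev k p i < k ^ p := by
  induction p generalizing i with
  | zero => simp [digitRev]
  | succ p ih =>
    rw [digitRev_succ, add_comm p 1]
    exact mul_pow_add_lt_pow_add (by simpa using Nat.mod_lt i hk) (ih _)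

theorem digitRev_digitRev {k p i : ℕ} (hk : 0 < k) (hi : i < k ^ p) : digitRev k p (digitRev k p i) = i := by
  induction p generalizing i with
  | zero => simp_all [digitRev]
  | succ p ih =>
    rw [digitRev_succ k p i, digitRev_succ', digitRev_mul_pow_add,
      ih (Nat.div_lt_of_lt_mul (by rwa [← pow_succ'])), mul_add_div_of_lt (digitRev_lt hk p _),
      Nat.mod_mod, Nat.div_add_mod]

theorem revP_of_lt {k p i : ℕ} (hi : i < k ^ p) : revP k p i = digitRev k p i := by
  rw [revP_eq, Nat.div_eq_of_lt hi, zero_mul, zero_add]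

theorem revP_mul_pow_add {k p w : ℕ} (d : ℕ) (hw : w < k ^ p) :
    revP k p (d * k ^ p + w) = d * k ^ p + digitRev k p w := by
  rw [revP_eq, digitRev_mul_pow_add, mul_add_div_of_lt hw]

theorem revP_succ_revP {k p d w : ℕ} (hk : 0 < k) (hd : d < k) (hw : w < k ^ p) :
    revP k (p + 1) (revP k p (d * k ^ p + w)) = w * k + d := by
  have hrev := digitRev_lt hk p w
  have hlt : d * k ^ p + digitRev k p w < k ^ (p + 1) := by
    rw [add_comm p]; exact mul_pow_add_lt_pow_add (by rwa [pow_one]) hrev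
  rw [revP_mul_pow_add d hw, revP_of_lt hlt, digitRev_succ', digitRev_mul_pow_add,
    digitRev_digitRev hk hw, mul_add_div_of_lt hrev, Nat.mod_eq_of_lt hd, mul_comm]

/-- Moving the top digit to the bottom `t` times moves the top `t` digits `x` below the rest `y`. -/
theorem iterate_mul_pow_add_of_rotate {k p : ℕ} (hk : 0 < k) {f : ℕ → ℕ}
    (hf : ∀ d < k, ∀ w < k ^ p, f (d * k ^ p + w) = w * k + d) {t s x y : ℕ}
    (hts : t + s = p + 1) (hx : x < k ^ t) (hy : y < k ^ s) :
    f^[t] (x * k ^ s + y) = y * k ^ t + x := by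
  induction t generalizing s x y with
  | zero => simp_all
  | succ t ih =>
    have htop : x / k ^ t < k := Nat.div_lt_of_lt_mul (by rwa [← pow_succ])
    have hlow : x % k ^ t < k ^ t := Nat.mod_lt x (by positivity)
    have hsplit : x * k ^ s + y = x / k ^ t * k ^ p + (x % k ^ t * k ^ s + y) := by
      rw [show p = t + s by omega, pow_add]
      nth_rewrite 1 [← Nat.div_add_mod' x (k ^ t)]
      ring
    have hrest : x % k ^ t * k ^ s + y < k ^ p := by
      rw [show p = t + s by omega]; exact mul_pow_add_lt_pow_add hlow hy
    have hcarry : y * k + x / k ^ t < k ^ (s + 1) := by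
      simpa using mul_pow_add_lt_pow_add (n := 1) hy (by rwa [pow_one])
    rw [Function.iterate_succ_apply, hsplit, hf _ htop _ hrest,
      show (x % k ^ t * k ^ s + y) * k + x / k ^ t = x % k ^ t * k ^ (s + 1) + (y * k + x / k ^ t)
        by ring,
      ih (by omega) hlow hcarry]
    conv_rhs => rw [← Nat.div_add_mod' x (k ^ t)]
    ring

theorem shuffle_iterate_id_general (k n : ℕ) (hk : 2 ≤ k)
    (i : ℕ) (hi : i < k ^ n) :
    (fun j => revP k n (revP k (n - 1) j))^[n] i = i := by
  obtain _ | p := n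
  · rfl
  have hk0 : 0 < k := by omega
  simpa using iterate_mul_pow_add_of_rotate hk0 (fun d hd w hw => revP_succ_revP hk0 hd hw)
    (s := 0) (y := 0) rfl hi (by simp)

/-- Iterating the two-phase digit-reversal shuffle `Ξ = rev_n ∘ rev_{n-1}`
`n` times returns every element of `{0, ..., k^n - 1}` to its original
position. -/
theorem shuffle_iterate_id (k n : ℕ) (hk : 2 ≤ k) (hn : 1 ≤ n)
    (i : ℕ) (hi : i < k ^ n) :
    (fun j => revP k n (revP k (n - 1) j))^[n] i = i :=
  shuffle_iterate_id_general k n hk i hi
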